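/- arXiv:1905.00138 — 2 statements merged into one kernel-verified Lean document; each statement's English description precedes it below -/
import Mathlib

section
/- Let ρ ∈ (0, 1/2], γ ≥ 1, C > 0, and let (a_x)_{x≥1} be a sequence of nonnegative reals with a_1 ≤ 1 satisfying a_{x+1} ≤ γ_x^{1/(1-ρ)} a_x + C a_x^{(1+ρ)/2} for all x ≥ 1, where γ_x = ((x+1)/x)^{α} with α ∈ (0,1]. Then there exists a constant C̄ > 0 such that a_x ≤ C̄ x^{2/(1-ρ)} for all x ≥ 1. -/
theorem stmt_4 (ρ α C : ℝ) (hρ0 : 0 < ρ) (hρ : ρ ≤ 1 / 2) (hα0 : 0 < α) (hα1 : α ≤ 1)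
    (hC : 0 < C) (a : ℕ → ℝ) (ha_nonneg : ∀ x, 0 ≤ a x) (ha1 : a 1 ≤ 1)
    (hrec : ∀ x : ℕ, 1 ≤ x →
      a (x + 1) ≤ (((x : ℝ) + 1) / x) ^ α * a x + C * a x ^ ((1 + ρ) / 2)) :
    ∃ C' > 0, ∀ x : ℕ, 1 ≤ x → a x ≤ C' * (x : ℝ) ^ (2 / (1 - ρ)) := by
  have h1ρ : 0 < 1 - ρ := by linarith
  set β : ℝ := 2 / (1 - ρ) with hβdef
  have hβ2 : 2 ≤ β := by
    rw [hβdef, le_div_iff₀ h1ρ]; linarith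
  have hβ1 : 1 ≤ β - 1 := by linarith
  set C' : ℝ := max 1 (C ^ β) with hC'def
  have hC'1 : (1 : ℝ) ≤ C' := le_max_left _ _
  have hC'0 : 0 < C' := lt_of_lt_of_le one_pos hC'1
  refine ⟨C', hC'0, ?_⟩
  intro x hx
  induction x, hx using Nat.le_induction with
  | base =>
    simp only [Nat.cast_one, Real.one_rpow, mul_one]
    linarith
  | succ x hx IH =>
    set X : ℝ := (x : ℝ) with hXdef
    have hX1 : (1 : ℝ) ≤ X := by rw [hXdef]; exact_mod_cast hx
    have hX0 : (0 : ℝ) < X := by linarith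
    have hbase1 : (1 : ℝ) ≤ (X + 1) / X := by
      rw [le_div_iff₀ hX0]; linarith
    have hcast : ((x + 1 : ℕ) : ℝ) = X + 1 := by push_cast; ring
    -- exponent identity
    have hexp : β * ((1 + ρ) / 2) = β - 1 := by
      rw [hβdef]; field_simp; ring
    -- key bound: C * C'^((1+ρ)/2) ≤ C'
    have hCC' : C * C' ^ ((1 + ρ) / 2) ≤ C' := by
      have h1 : C ≤ C' ^ ((1 - ρ) / 2) := by
        have h2 : C ^ β ≤ C' := le_max_right _ _
        have h3 : (C ^ β) ^ ((1 - ρ) / 2) ≤ C' ^ ((1 - ρ) / 2) :=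
          Real.rpow_le_rpow (Real.rpow_nonneg hC.le _) h2 (by linarith)
        rwa [← Real.rpow_mul hC.le, hβdef, show 2 / (1 - ρ) * ((1 - ρ) / 2) = 1 by
          field_simp, Real.rpow_one] at h3
      calc C * C' ^ ((1 + ρ) / 2) ≤ C' ^ ((1 - ρ) / 2) * C' ^ ((1 + ρ) / 2) :=
            mul_le_mul_of_nonneg_right h1 (Real.rpow_nonneg hC'0.le _)
        _ = C' ^ ((1 - ρ) / 2 + (1 + ρ) / 2) := (Real.rpow_add hC'0 _ _).symm
        _ = C' := by rw [show (1 - ρ) / 2 + (1 + ρ) / 2 = 1 by ring, Real.rpow_one]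
    -- rewrite X^β as X * X^(β-1)
    have hXsplit : X ^ β = X * X ^ (β - 1) := by
      rw [← Real.rpow_one_add' hX0.le (by linarith)]; ring_nf
    have step1 : ((X + 1) / X) ^ α ≤ (X + 1) / X := by
      calc ((X + 1) / X) ^ α ≤ ((X + 1) / X) ^ (1 : ℝ) :=
            Real.rpow_le_rpow_of_exponent_le hbase1 hα1
        _ = (X + 1) / X := Real.rpow_one _
    have step2 : a x ^ ((1 + ρ) / 2) ≤ C' ^ ((1 + ρ) / 2) * X ^ (β - 1) := by
      have h := Real.rpow_le_rpow (ha_nonneg x) IH (by linarith : (0:ℝ) ≤ (1 + ρ) / 2)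
      rwa [Real.mul_rpow hC'0.le (Real.rpow_nonneg hX0.le _),
        ← Real.rpow_mul hX0.le, hexp] at h
    have hXb1 : (0 : ℝ) ≤ X ^ (β - 1) := Real.rpow_nonneg hX0.le _
    have main : a (x + 1) ≤ C' * (X + 2) * X ^ (β - 1) := by
      calc a (x + 1) ≤ ((X + 1) / X) ^ α * a x + C * a x ^ ((1 + ρ) / 2) := hrec x hx
        _ ≤ ((X + 1) / X) * (C' * X ^ β) + C * (C' ^ ((1 + ρ) / 2) * X ^ (β - 1)) :=
            add_le_add (mul_le_mul step1 IH (ha_nonneg x) (le_trans zero_le_one hbase1))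
              (mul_le_mul_of_nonneg_left step2 hC.le)
        _ = C' * (X + 1) * X ^ (β - 1) + (C * C' ^ ((1 + ρ) / 2)) * X ^ (β - 1) := by
            rw [hXsplit]; field_simp
        _ ≤ C' * (X + 1) * X ^ (β - 1) + C' * X ^ (β - 1) := by
            gcongr
        _ = C' * (X + 2) * X ^ (β - 1) := by ring
    -- final: (X+2) * X^(β-1) ≤ (X+1)^β
    have hfin : (X + 2) * X ^ (β - 1) ≤ (X + 1) ^ β := by
      have hX1pos : (0 : ℝ) < X + 1 := by linarith
      have e1 : (X + 1) ^ β = (X + 1) * (X + 1) ^ (β - 1) := by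
        rw [← Real.rpow_one_add' hX1pos.le (by linarith)]; ring_nf
      have e2 : (X + 1) ^ (β - 1) = ((X + 1) / X) ^ (β - 1) * X ^ (β - 1) := by
        rw [← Real.mul_rpow (by positivity) hX0.le, div_mul_cancel₀ _ hX0.ne']
      have e3 : (X + 1) / X ≤ ((X + 1) / X) ^ (β - 1) := by
        calc (X + 1) / X = ((X + 1) / X) ^ (1 : ℝ) := (Real.rpow_one _).symm
          _ ≤ ((X + 1) / X) ^ (β - 1) := Real.rpow_le_rpow_of_exponent_le hbase1 hβ1
      have e4 : (X + 2) ≤ (X + 1) * ((X + 1) / X) := by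
        have h5 : (X + 1) * ((X + 1) / X) = (X + 1) ^ 2 / X := by ring
        rw [h5, le_div_iff₀ hX0]; nlinarith
      calc (X + 2) * X ^ (β - 1) ≤ ((X + 1) * ((X + 1) / X)) * X ^ (β - 1) :=
            mul_le_mul_of_nonneg_right e4 hXb1
        _ ≤ ((X + 1) * ((X + 1) / X) ^ (β - 1)) * X ^ (β - 1) :=
            mul_le_mul_of_nonneg_right (mul_le_mul_of_nonneg_left e3 hX1pos.le) hXb1
        _ = (X + 1) ^ β := by rw [e1, e2]; ring
    calc a (x + 1) ≤ C' * ((X + 2) * X ^ (β - 1)) := by linarith [main]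
      _ ≤ C' * (X + 1) ^ β := by gcongr
      _ = C' * ((x + 1 : ℕ) : ℝ) ^ β := by rw [hcast]
end

section
/- Let ρ ∈ (0,1/2], let δ_{2k} = δ_{2k+1} = (k+1)^ρ for k ≥ 0, and f(0,x) = (x+1)^α with α ∈ (1/2,1). If (N_x)_{x≥0} are nonnegative integers such that both ∑_{x=0}^∞ (N_x+1)^{-ρ}/(x+1)^α < ∞ and ∑_{x=0}^∞ (N_x+1)^{1-2ρ}/(x+1)^{2α} < ∞, and ρ ≤ 1-α, then ∑_{x=0}^∞ (N_x+1)^{-ρ/p + (1-2ρ)/q}/(x+1) < ∞ where p = α/(2α-1) and q = α/(1-α); moreover the exponent -ρ/p + (1-2ρ)/q is nonnegative, yielding a contradiction since ∑ 1/(x+1) = ∞. Consequently, no such integer sequence (N_x) exists. -/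
theorem stmt_9 (α ρ p q : ℝ) (hα1 : 1 / 2 < α) (hα2 : α < 1)
    (hρ0 : 0 < ρ) (hρ2 : ρ ≤ 1 / 2) (hρα : ρ ≤ 1 - α)
    (hp : p = α / (2 * α - 1)) (hq : q = α / (1 - α))
    (N : ℕ → ℕ)
    (h1 : Summable fun x : ℕ => ((N x : ℝ) + 1) ^ (-ρ) / ((x : ℝ) + 1) ^ α)
    (h2 : Summable fun x : ℕ => ((N x : ℝ) + 1) ^ (1 - 2 * ρ) / ((x : ℝ) + 1) ^ (2 * α)) :
    (Summable fun x : ℕ =>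
        ((N x : ℝ) + 1) ^ (-(ρ / p) + (1 - 2 * ρ) / q) / ((x : ℝ) + 1)) ∧
    0 ≤ -(ρ / p) + (1 - 2 * ρ) / q ∧ False := by
  have hα0 : (0:ℝ) < α := by linarith
  have h2α : (0:ℝ) < 2 * α - 1 := by linarith
  have h1α : (0:ℝ) < 1 - α := by linarith
  have hp0 : 0 < p := by rw [hp]; positivity
  have hq0 : 0 < q := by rw [hq]; positivity
  have hip : 1 / p = (2 * α - 1) / α := by rw [hp]; field_simp
  have hiq : 1 / q = (1 - α) / α := by rw [hq]; field_simp
  have hpq : 1 / p + 1 / q = 1 := by rw [hip, hiq]; field_simp; ring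
  have hsum1 : α * (1 / p) + 2 * α * (1 / q) = 1 := by
    rw [hip, hiq]; field_simp; ring
  have he : -(ρ / p) + (1 - 2 * ρ) / q = (1 - α - ρ) / α := by
    rw [div_eq_mul_one_div ρ p, div_eq_mul_one_div (1 - 2 * ρ) q, hip, hiq]
    field_simp; ring
  have he0 : 0 ≤ -(ρ / p) + (1 - 2 * ρ) / q := by
    rw [he]; exact div_nonneg (by linarith) hα0.le
  have hNx : ∀ x : ℕ, (0:ℝ) < (N x : ℝ) + 1 := fun x => by positivity
  have hx1 : ∀ x : ℕ, (0:ℝ) < (x : ℝ) + 1 := fun x => by positivity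
  have key : ∀ x : ℕ,
      ((N x : ℝ) + 1) ^ (-(ρ / p) + (1 - 2 * ρ) / q) / ((x : ℝ) + 1)
        = (((N x : ℝ) + 1) ^ (-ρ) / ((x : ℝ) + 1) ^ α) ^ (1 / p)
          * (((N x : ℝ) + 1) ^ (1 - 2 * ρ) / ((x : ℝ) + 1) ^ (2 * α)) ^ (1 / q) := by
    intro x
    rw [Real.div_rpow (by positivity) (by positivity),
        Real.div_rpow (by positivity) (by positivity),
        ← Real.rpow_mul (hNx x).le, ← Real.rpow_mul (hNx x).le,
        ← Real.rpow_mul (hx1 x).le, ← Real.rpow_mul (hx1 x).le,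
        div_mul_div_comm, ← Real.rpow_add (hNx x), ← Real.rpow_add (hx1 x),
        show -ρ * (1 / p) + (1 - 2 * ρ) * (1 / q) = -(ρ / p) + (1 - 2 * ρ) / q by ring,
        hsum1, Real.rpow_one]
  have hS : Summable (fun x : ℕ =>
      ((N x : ℝ) + 1) ^ (-(ρ / p) + (1 - 2 * ρ) / q) / ((x : ℝ) + 1)) := by
    refine Summable.of_nonneg_of_le (fun x => by positivity) (fun x => ?_)
      ((h1.mul_left (1 / p)).add (h2.mul_left (1 / q)))
    rw [key x]
    exact Real.geom_mean_le_arith_mean2_weighted (by positivity) (by positivity)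
      (by positivity) (by positivity) hpq
  refine ⟨hS, he0, ?_⟩
  have hharm : Summable (fun x : ℕ => 1 / ((x : ℝ) + 1)) := by
    refine Summable.of_nonneg_of_le (fun x => by positivity) (fun x => ?_) hS
    have h1le : (1:ℝ) ≤ ((N x : ℝ) + 1) ^ (-(ρ / p) + (1 - 2 * ρ) / q) :=
      Real.one_le_rpow (by simp) he0
    rw [div_le_div_iff₀ (hx1 x) (hx1 x)]
    nlinarith [hx1 x]
  have heq : (fun n : ℕ => 1 / ((n : ℝ) + 1)) = (fun n : ℕ => 1 / (((n + 1 : ℕ)) : ℝ)) := by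
    funext n; push_cast; ring
  rw [heq] at hharm
  exact Real.not_summable_one_div_natCast
    ((summable_nat_add_iff (f := fun n : ℕ => 1 / (n : ℝ)) 1).mp hharm)
end
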